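/- Fix a time t with 0 ≤ t ≤ T. The maximum over x ∈ X of W_t(x) + V_t(x), the sum of the forward and backward value functions at time t, equals the maximum of the objective G over all paths x : {0,…,T} → X. (The value identity underlying the paper's Corollary 2, the 'two-filter' formula.) -/

import Mathlib

/-!
Split the objective at time `t` as `G(x) = A(x) + B(x)`, where `A` only reads `x_0, …, x_t`
and `B` only reads `x_t, …, x_T`; then `W_t(x) + V_t(x)` is the supremum of `A` plus the
supremum of `B` over paths through `x` at time `t`. Two such paths can be spliced at time `t`
into one path carrying the `A`-value of the first and the `B`-value of the second, so the two
suprema are attained jointly by one path, and maximizing over `x` gives `max G`.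
-/

open Finset

/-- The objective `G` of the modal path problem; here `γ s` plays the role of the
paper's `γ_{s+1}` (transition score from time `s` to time `s+1`). -/
noncomputable def pathObj {X : Type*} {T : ℕ} (γ0 : X → ℝ) (γ : Fin T → X → X → ℝ)
    (x : Fin (T + 1) → X) : ℝ :=
  γ0 (x 0) + ∑ s : Fin T, γ s (x s.succ) (x s.castSucc)

/-- The backward value function `V_t(x)`: the maximum of `∑_{s=t+1}^{T} γ_s(x_s, x_{s-1})`
over all choices of `x_{t+1}, …, x_T`, with `x_t = x` (the summand only depends on the
path from time `t` onwards). In particular `V_T = 0`. -/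
noncomputable def backVal {X : Type*} [Fintype X] [Nonempty X] {T : ℕ}
    (γ : Fin T → X → X → ℝ) (t : Fin (T + 1)) (x : X) : ℝ :=
  ⨆ z : { z : Fin (T + 1) → X // z t = x },
    ∑ s ∈ Finset.univ.filter (fun s : Fin T => (t : ℕ) ≤ (s : ℕ)),
      γ s (z.1 s.succ) (z.1 s.castSucc)

/-- The forward value function `W_t(x)`: the maximum of
`γ_0(x_0) + ∑_{s=1}^{t} γ_s(x_s, x_{s-1})` over all choices of `x_0, …, x_{t-1}`,
with `x_t = x` (the expression only depends on the path up to time `t`).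
In particular `W_0 = γ_0`. -/
noncomputable def fwdVal {X : Type*} [Fintype X] [Nonempty X] {T : ℕ}
    (γ0 : X → ℝ) (γ : Fin T → X → X → ℝ) (t : Fin (T + 1)) (x : X) : ℝ :=
  ⨆ z : { z : Fin (T + 1) → X // z t = x },
    (γ0 (z.1 0) +
      ∑ s ∈ Finset.univ.filter (fun s : Fin T => (s : ℕ) < (t : ℕ)),
        γ s (z.1 s.succ) (z.1 s.castSucc))
theorem ciSup_add_ciSup_fiber_eq_ciSup {ι X : Type*} [Finite ι] [Finite X] [Nonempty X]
    (π : ι → X) (hπ : Function.Surjective π) (f g : ι → ℝ)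
    (splice : ∀ z₁ z₂, π z₁ = π z₂ → ∃ w, f w = f z₁ ∧ g w = g z₂) :
    (⨆ x, (⨆ z : {z // π z = x}, f z) + ⨆ z : {z // π z = x}, g z) = ⨆ z, f z + g z := by
  have : Nonempty ι := hπ.nonempty
  apply le_antisymm
  · refine ciSup_le fun x => ?_
    have : Nonempty {z // π z = x} := let ⟨z, hz⟩ := hπ x; ⟨⟨z, hz⟩⟩
    rw [ciSup_add (Finite.bddAbove_range _)]
    refine ciSup_le fun z₁ => ?_
    rw [add_ciSup (Finite.bddAbove_range _)]
    refine ciSup_le fun z₂ => ?_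
    obtain ⟨w, hf, hg⟩ := splice z₁ z₂ (z₁.2.trans z₂.2.symm)
    rw [← hf, ← hg]
    exact le_ciSup (f := fun w => f w + g w) (Finite.bddAbove_range _) w
  · have le_fiber (h : ι → ℝ) (z : ι) : h z ≤ ⨆ w : {w // π w = π z}, h w :=
      le_ciSup (f := fun w : {w // π w = π z} => h w) (Finite.bddAbove_range _) ⟨z, rfl⟩
    refine ciSup_le fun z => ?_
    calc f z + g z ≤ (⨆ w : {w // π w = π z}, f w) + ⨆ w : {w // π w = π z}, g w :=
          add_le_add (le_fiber f z) (le_fiber g z)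
      _ ≤ _ := le_ciSup (f := fun x => (⨆ w : {w // π w = x}, f w) + ⨆ w : {w // π w = x}, g w)
          (Finite.bddAbove_range _) (π z)

section Splice

variable {X : Type*} {T : ℕ}

def spliceAt (t : Fin (T + 1)) (z₁ z₂ : Fin (T + 1) → X) : Fin (T + 1) → X :=
  fun s => if s ≤ t then z₁ s else z₂ s

lemma spliceAt_of_le {t s : Fin (T + 1)} (z₁ z₂ : Fin (T + 1) → X) (hs : s ≤ t) :
    spliceAt t z₁ z₂ s = z₁ s :=
  if_pos hs

lemma spliceAt_of_ge {t s : Fin (T + 1)} {z₁ z₂ : Fin (T + 1) → X} (h : z₁ t = z₂ t)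
    (hs : t ≤ s) : spliceAt t z₁ z₂ s = z₂ s := by
  rcases hs.eq_or_lt with rfl | hlt
  · exact (if_pos le_rfl).trans h
  · exact if_neg hlt.not_ge

end Splice

section PrefixSuffix

variable {X : Type*} {T : ℕ} (γ0 : X → ℝ) (γ : Fin T → X → X → ℝ) (t : Fin (T + 1))

noncomputable def prefixObj (z : Fin (T + 1) → X) : ℝ :=
  γ0 (z 0) + ∑ s ∈ univ.filter (fun s : Fin T => (s : ℕ) < (t : ℕ)), γ s (z s.succ) (z s.castSucc)

noncomputable def suffixObj (z : Fin (T + 1) → X) : ℝ :=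
  ∑ s ∈ univ.filter (fun s : Fin T => (t : ℕ) ≤ (s : ℕ)), γ s (z s.succ) (z s.castSucc)

lemma pathObj_eq_prefixObj_add_suffixObj (z : Fin (T + 1) → X) :
    pathObj γ0 γ z = prefixObj γ0 γ t z + suffixObj γ t z := by
  rw [pathObj, prefixObj, suffixObj, add_assoc, ← sum_filter_add_sum_filter_not univ
    (fun s : Fin T => (s : ℕ) < (t : ℕ))]
  simp only [not_lt]

lemma prefixObj_spliceAt (z₁ z₂ : Fin (T + 1) → X) :
    prefixObj γ0 γ t (spliceAt t z₁ z₂) = prefixObj γ0 γ t z₁ := by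
  unfold prefixObj
  rw [spliceAt_of_le z₁ z₂ (Fin.zero_le t)]
  refine congrArg _ (sum_congr rfl fun s hs => ?_)
  have hst : (s : ℕ) < t := (mem_filter.mp hs).2
  rw [spliceAt_of_le z₁ z₂ (Fin.le_iff_val_le_val.mpr (by simpa using hst)),
    spliceAt_of_le z₁ z₂ (Fin.le_iff_val_le_val.mpr (by simpa using hst.le))]

lemma suffixObj_spliceAt {z₁ z₂ : Fin (T + 1) → X} (h : z₁ t = z₂ t) :
    suffixObj γ t (spliceAt t z₁ z₂) = suffixObj γ t z₂ := by
  refine sum_congr rfl fun s hs => ?_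
  have hts : (t : ℕ) ≤ s := (mem_filter.mp hs).2
  rw [spliceAt_of_ge h (Fin.le_iff_val_le_val.mpr (by simpa using hts.trans (Nat.le_succ s))),
    spliceAt_of_ge h (Fin.le_iff_val_le_val.mpr (by simpa using hts))]

end PrefixSuffix

/-- **Two-filter formula, value identity.** For any `0 ≤ t ≤ T`, the maximum over
`x` of `W_t(x) + V_t(x)` equals the maximum of the objective `G` over all paths. -/
theorem two_filter_value_identity
    {X : Type*} [Fintype X] [Nonempty X] {T : ℕ}
    (γ0 : X → ℝ) (γ : Fin T → X → X → ℝ) (t : Fin (T + 1)) :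
    (⨆ x : X, (fwdVal γ0 γ t x + backVal γ t x)) =
      ⨆ z : Fin (T + 1) → X, pathObj γ0 γ z := by
  have hsurj : Function.Surjective fun z : Fin (T + 1) → X => z t :=
    fun x => ⟨fun _ => x, rfl⟩
  -- `fwdVal` and `backVal` unfold to the fiberwise suprema of `prefixObj` and `suffixObj`.
  calc (⨆ x : X, (fwdVal γ0 γ t x + backVal γ t x))
      = ⨆ z : Fin (T + 1) → X, prefixObj γ0 γ t z + suffixObj γ t z :=
        ciSup_add_ciSup_fiber_eq_ciSup _ hsurj _ _ fun z₁ z₂ h =>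
          ⟨spliceAt t z₁ z₂, prefixObj_spliceAt γ0 γ t z₁ z₂, suffixObj_spliceAt γ t h⟩
    _ = ⨆ z : Fin (T + 1) → X, pathObj γ0 γ z := by
        simp only [pathObj_eq_prefixObj_add_suffixObj γ0 γ t]
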